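/- arXiv:2003.07059 — 3 statements merged into one kernel-verified Lean document; each statement's English description precedes it below -/
import Mathlib

section
/- Let k_0 = -3, k_{2n-1} = -3^n - 3 and k_{2n} = 3^{n+1} - 9 for n ≥ 1, and let a_n = ∑_{j=0}^{n-1}(k_j + 6). Then a_{2n-1} = 3^n and a_{2n} = 3 for all n ≥ 1; consequently ∑_{n=1}^∞ 1/a_n = ∞ while ∑_{n=1}^∞ 1/(a_n + a_{n+1}) < ∞. -/
/-!
The increments `k (2n) + 6 = 3^(n+1) - 3` and `k (2n+1) + 6 = 3 - 3^(n+1)` cancel in pairs,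
so the partial sums alternate between `3^n` and `3`. Hence `1 / a n` does not tend to zero,
while every denominator `a n + a (n+1)` contains a power `3^m` with `m ≈ n/2`, which bounds
the second series by a geometric one on even and on odd indices separately.
-/

open Filter

theorem not_summable_of_comp_eq_const {f : ℕ → ℝ} {g : ℕ → ℕ} (hg : Tendsto g atTop atTop)
    {c : ℝ} (hc : c ≠ 0) (hfg : ∀ n, f (g n) = c) : ¬ Summable f := by
  intro hf
  have hzero : Tendsto (fun n => f (g n)) atTop (nhds 0) := hf.tendsto_atTop_zero.comp hg
  simp only [hfg] at hzero
  exact hc (tendsto_nhds_unique tendsto_const_nhds hzero)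

theorem summable_of_even_odd_le_geometric {f : ℕ → ℝ} {r : ℝ} (hr0 : 0 ≤ r) (hr1 : r < 1)
    (hf : ∀ n, 0 ≤ f n) (heven : ∀ m, f (2 * m) ≤ r ^ m) (hodd : ∀ m, f (2 * m + 1) ≤ r ^ m) :
    Summable f :=
  have hgeom := summable_geometric_of_lt_one hr0 hr1
  .even_add_odd (.of_nonneg_of_le (fun _ => hf _) heven hgeom)
    (.of_nonneg_of_le (fun _ => hf _) hodd hgeom)

theorem one_div_pow_add_le {b y : ℝ} (hb : 1 ≤ b) (hy : 0 ≤ y) {m j : ℕ} (hmj : m ≤ j) :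
    1 / (b ^ j + y) ≤ (1 / b) ^ m := by
  have hbm : 0 < b ^ m := pow_pos (by linarith) m
  calc 1 / (b ^ j + y) ≤ 1 / b ^ m :=
        one_div_le_one_div_of_le hbm (by linarith [pow_le_pow_right₀ hb hmj])
    _ = (1 / b) ^ m := (one_div_pow b m).symm

theorem partial_sums_odd_even (k : ℕ → ℤ) (hk0 : k 0 = -3)
    (hodd : ∀ n ≥ 1, k (2 * n - 1) = -3 ^ n - 3)
    (heven : ∀ n ≥ 1, k (2 * n) = 3 ^ (n + 1) - 9)
    (a : ℕ → ℝ) (ha : ∀ n, a n = ∑ j ∈ Finset.range n, ((k j : ℝ) + 6)) (m : ℕ) :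
    a (2 * m + 1) = 3 ^ (m + 1) ∧ a (2 * m + 2) = 3 := by
  have hstep : ∀ n, a (n + 1) = a n + ((k n : ℝ) + 6) := fun n => by
    rw [ha, ha, Finset.sum_range_succ]
  have hdown : ∀ i, a (2 * i + 2) = a (2 * i + 1) - 3 ^ (i + 1) + 3 := fun i => by
    have hk : k (2 * i + 1) = -3 ^ (i + 1) - 3 := hodd (i + 1) (by omega)
    rw [hstep, hk]
    push_cast
    ring
  have hup : ∀ i, a (2 * i + 3) = a (2 * i + 2) + 3 ^ (i + 2) - 3 := fun i => by
    have hk : k (2 * i + 2) = 3 ^ (i + 2) - 9 := heven (i + 1) (by omega)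
    rw [hstep, hk]
    push_cast
    ring
  have hodd_val : a (2 * m + 1) = 3 ^ (m + 1) := by
    induction m with
    | zero => norm_num [ha, hk0]
    | succ m ih =>
      rw [show 2 * (m + 1) + 1 = 2 * m + 3 by ring, hup, hdown, ih]
      ring
  exact ⟨hodd_val, by rw [hdown, hodd_val]; ring⟩

/-- For the sequence `k₀ = -3`, `k_{2n-1} = -3^n - 3`, `k_{2n} = 3^{n+1} - 9`
(for `n ≥ 1`) with partial sums `a n = ∑_{j=0}^{n-1} (k j + 6)`, one has
`a (2n-1) = 3^n` and `a (2n) = 3` for all `n ≥ 1`; consequently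
`∑ 1 / a n = ∞` while `∑ 1 / (a n + a (n+1)) < ∞`. -/
theorem stmt_3 (k : ℕ → ℤ) (hk0 : k 0 = -3)
    (hodd : ∀ n ≥ 1, k (2 * n - 1) = -3 ^ n - 3)
    (heven : ∀ n ≥ 1, k (2 * n) = 3 ^ (n + 1) - 9)
    (a : ℕ → ℝ) (ha : ∀ n, a n = ∑ j ∈ Finset.range n, ((k j : ℝ) + 6)) :
    (∀ n ≥ 1, a (2 * n - 1) = 3 ^ n ∧ a (2 * n) = 3) ∧
      ¬ Summable (fun n : ℕ => 1 / a (n + 1)) ∧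
      Summable (fun n : ℕ => 1 / (a (n + 1) + a (n + 2))) := by
  have hval := partial_sums_odd_even k hk0 hodd heven a ha
  have hpos : ∀ n, 0 < a (n + 1) := fun n => by
    obtain ⟨m, rfl | rfl⟩ := Nat.even_or_odd' n
    · simp [hval]
    · simp [show 2 * m + 1 + 1 = 2 * m + 2 by ring, hval]
  refine ⟨fun n hn => ?_, ?_, ?_⟩
  · obtain ⟨m, rfl⟩ := Nat.exists_eq_add_of_le' hn
    simpa [show 2 * (m + 1) - 1 = 2 * m + 1 by omega, mul_add] using hval m
  · exact not_summable_of_comp_eq_const (g := fun m => 2 * m + 1)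
      (tendsto_atTop_mono (fun m => by simp only [id]; omega) tendsto_id) (c := 1 / 3)
      (by norm_num) fun m => by simp [hval m]
  · refine summable_of_even_odd_le_geometric (r := 1 / 3) (by norm_num) (by norm_num)
      (fun n => one_div_nonneg.2 (add_pos (hpos n) (hpos (n + 1))).le) (fun m => ?_) (fun m => ?_)
    · rw [(hval m).1]
      exact one_div_pow_add_le (by norm_num) (hpos _).le (by omega)
    · rw [show 2 * m + 1 + 2 = 2 * (m + 1) + 1 by ring, (hval (m + 1)).1, add_comm]
      exact one_div_pow_add_le (by norm_num) (hpos _).le (by omega)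
end

section
/- Let h_n ≥ 1, d_n ≥ 1, and c_n be defined by c_1 = h_1 and c_n = c_{n-1} + h_n(1 + ∑_{k=1}^{n-1} d_k c_k). Then for n ≥ 3 one can write c_n = (1 + α_n)·h_n·d_{n-1}·c_{n-1} where 0 ≤ α_n ≤ 1/h_n + 1/h_{n-1}. Consequently, if ∑_{n=1}^∞ 1/h_n < ∞, then there is a constant β > 0 with d_n·c_n ≤ β·∏_{k=1}^{n} d_k·h_k for all n. -/
/-! Splitting off the last term of the sum, the recursion reads
`c n = h n d (n-1) c (n-1) + c (n-1) + h n (1 + ∑_{k ≤ n-2} d k c k)`, while the recursion one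
step earlier gives `h (n-1) (1 + ∑_{k ≤ n-2} d k c k) ≤ c (n-1)`; together they bound `α_n`
(already for `n ≥ 2`). Hence the ratio `d n c n / ∏_{k ≤ n} d k h k`, which equals `1` at `n = 1`,
grows by a factor at most `1 + 1/h n + 1/h (n-1)` per step, and a discrete Grönwall estimate bounds
it by `exp (∑ (1/h (m+2) + 1/h (m+1)))`. -/

open Finset Real

theorem le_mul_exp_tsum_of_le_one_add_mul {u ε : ℕ → ℝ} (hε : ∀ n, 0 ≤ ε n) (hs : Summable ε)
    (hu0 : 0 ≤ u 0) (hstep : ∀ n, u (n + 1) ≤ (1 + ε n) * u n) (n : ℕ) :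
    u n ≤ u 0 * exp (∑' k, ε k) := by
  have hprod : u n ≤ u 0 * ∏ k ∈ range n, (1 + ε k) := by
    induction n with
    | zero => simp
    | succ n ih =>
      calc u (n + 1) ≤ (1 + ε n) * u n := hstep n
        _ ≤ (1 + ε n) * (u 0 * ∏ k ∈ range n, (1 + ε k)) := by gcongr; linarith [hε n]
        _ = u 0 * ∏ k ∈ range (n + 1), (1 + ε k) := by rw [prod_range_succ]; ring
  calc u n ≤ u 0 * ∏ k ∈ range n, (1 + ε k) := hprod
    _ ≤ u 0 * exp (∑ k ∈ range n, ε k) := by gcongr; exact prod_one_add_le_exp_sum _ hε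
    _ ≤ u 0 * exp (∑' k, ε k) := by gcongr; exact hs.sum_le_tsum _ fun k _ => hε k

section Recurrence

variable {h d c : ℕ → ℝ}

theorem pos_of_rec (hh : ∀ n ≥ 1, 1 ≤ h n) (hd : ∀ n ≥ 1, 1 ≤ d n) (hc1 : c 1 = h 1)
    (hrec : ∀ n ≥ 2, c n = c (n - 1) + h n * (1 + ∑ k ∈ Icc 1 (n - 1), d k * c k)) :
    ∀ n ≥ 1, 0 < c n := by
  intro n
  induction n using Nat.strong_induction_on with
  | _ n ih =>
    intro hn
    obtain rfl | hn2 := hn.eq_or_lt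
    · linarith [hh 1 le_rfl]
    have hsum : 0 ≤ ∑ k ∈ Icc 1 (n - 1), d k * c k :=
      sum_nonneg fun k hk => by
        obtain ⟨hk1, hkn⟩ := mem_Icc.mp hk
        exact mul_nonneg (by linarith [hd k hk1]) (ih k (by omega) hk1).le
    rw [hrec n hn2]
    have := ih (n - 1) (by omega) (by omega)
    have := hh n hn
    positivity

theorem mul_one_add_sum_le_of_rec (hh : ∀ n ≥ 1, 1 ≤ h n) (hd : ∀ n ≥ 1, 1 ≤ d n)
    (hc1 : c 1 = h 1)
    (hrec : ∀ n ≥ 2, c n = c (n - 1) + h n * (1 + ∑ k ∈ Icc 1 (n - 1), d k * c k))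
    (n : ℕ) (hn : 1 ≤ n) : h n * (1 + ∑ k ∈ Icc 1 (n - 1), d k * c k) ≤ c n := by
  obtain rfl | hn2 := hn.eq_or_lt
  · simp [hc1]
  rw [hrec n hn2]
  linarith [pos_of_rec hh hd hc1 hrec (n - 1) (by omega)]

theorem eq_mul_add_of_rec
    (hrec : ∀ n ≥ 2, c n = c (n - 1) + h n * (1 + ∑ k ∈ Icc 1 (n - 1), d k * c k))
    (n : ℕ) (hn : 2 ≤ n) :
    c n = h n * (d (n - 1) * c (n - 1)) +
      (c (n - 1) + h n * (1 + ∑ k ∈ Icc 1 (n - 2), d k * c k)) := by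
  obtain ⟨m, rfl⟩ : ∃ m, n = m + 2 := ⟨n - 2, by omega⟩
  rw [hrec (m + 2) hn, show m + 2 - 1 = m + 1 by rfl, sum_Icc_succ_top (by omega)]
  simp only [Nat.add_sub_cancel]
  ring

theorem exists_eq_one_add_mul_of_rec (hh : ∀ n ≥ 1, 1 ≤ h n) (hd : ∀ n ≥ 1, 1 ≤ d n)
    (hc1 : c 1 = h 1)
    (hrec : ∀ n ≥ 2, c n = c (n - 1) + h n * (1 + ∑ k ∈ Icc 1 (n - 1), d k * c k))
    (n : ℕ) (hn : 2 ≤ n) :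
    ∃ α : ℝ, c n = (1 + α) * (h n * (d (n - 1) * c (n - 1))) ∧
      0 ≤ α ∧ α ≤ 1 / h n + 1 / h (n - 1) := by
  have hpos := pos_of_rec hh hd hc1 hrec
  set T := 1 + ∑ k ∈ Icc 1 (n - 2), d k * c k
  have hT : 0 ≤ T := by
    have : 0 ≤ ∑ k ∈ Icc 1 (n - 2), d k * c k :=
      sum_nonneg fun k hk => by
        have hk1 := (mem_Icc.mp hk).1
        exact mul_nonneg (by linarith [hd k hk1]) (hpos k hk1).le
    linarith
  have hTx : h (n - 1) * T ≤ c (n - 1) :=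
    mul_one_add_sum_le_of_rec hh hd hc1 hrec (n - 1) (by omega)
  have ha := hh n (by omega)
  have hb := hh (n - 1) (by omega)
  have hD := hd (n - 1) (by omega)
  have hx := hpos (n - 1) (by omega)
  refine ⟨1 / (h n * d (n - 1)) + T / (d (n - 1) * c (n - 1)), ?_, by positivity, ?_⟩
  · rw [eq_mul_add_of_rec hrec n hn]
    field_simp
    ring
  · gcongr ?_ + ?_
    · exact one_div_le_one_div_of_le (by positivity) (le_mul_of_one_le_right (by positivity) hD)
    · calc T / (d (n - 1) * c (n - 1)) ≤ T / c (n - 1) :=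
            div_le_div_of_nonneg_left hT hx (le_mul_of_one_le_left hx.le hD)
        _ ≤ 1 / h (n - 1) := by
            rw [div_le_div_iff₀ hx (by positivity)]
            linarith

theorem prod_Icc_mul_pos (hh : ∀ n ≥ 1, 1 ≤ h n) (hd : ∀ n ≥ 1, 1 ≤ d n) (n : ℕ) :
    0 < ∏ k ∈ Icc 1 n, d k * h k :=
  prod_pos fun k hk => by
    have hk1 := (mem_Icc.mp hk).1
    nlinarith [hh k hk1, hd k hk1]

theorem div_prod_succ_le_of_rec (hh : ∀ n ≥ 1, 1 ≤ h n) (hd : ∀ n ≥ 1, 1 ≤ d n)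
    (hc1 : c 1 = h 1)
    (hrec : ∀ n ≥ 2, c n = c (n - 1) + h n * (1 + ∑ k ∈ Icc 1 (n - 1), d k * c k))
    (n : ℕ) (hn : 1 ≤ n) :
    d (n + 1) * c (n + 1) / ∏ k ∈ Icc 1 (n + 1), d k * h k ≤
      (1 + (1 / h (n + 1) + 1 / h n)) * (d n * c n / ∏ k ∈ Icc 1 n, d k * h k) := by
  obtain ⟨α, hα, -, hαle⟩ := exists_eq_one_add_mul_of_rec hh hd hc1 hrec (n + 1) (by omega)
  simp only [Nat.add_sub_cancel] at hα hαle
  have hd' : d (n + 1) ≠ 0 := by linarith [hd (n + 1) (by omega)]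
  have hh' : h (n + 1) ≠ 0 := by linarith [hh (n + 1) (by omega)]
  have hP := prod_Icc_mul_pos hh hd n
  have hratio : 0 ≤ d n * c n / ∏ k ∈ Icc 1 n, d k * h k := by
    have := pos_of_rec hh hd hc1 hrec n hn
    have := hd n hn
    positivity
  calc d (n + 1) * c (n + 1) / ∏ k ∈ Icc 1 (n + 1), d k * h k
      = (1 + α) * (d n * c n / ∏ k ∈ Icc 1 n, d k * h k) := by
        rw [prod_Icc_succ_top (by omega), hα]
        field_simp
    _ ≤ _ := by gcongr

end Recurrence

/-- With `h n ≥ 1`, `d n ≥ 1`, `c 1 = h 1` and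
`c n = c (n-1) + h n * (1 + ∑_{k=1}^{n-1} d k * c k)` for `n ≥ 2`, for every
`n ≥ 3` one can write `c n = (1 + α) * h n * d (n-1) * c (n-1)` with
`0 ≤ α ≤ 1 / h n + 1 / h (n-1)`; consequently, if `∑ 1 / h n < ∞`, then there
is `β > 0` with `d n * c n ≤ β * ∏_{k=1}^n d k * h k` for all `n ≥ 1`. -/
theorem stmt_7 (h d c : ℕ → ℝ) (hh : ∀ n ≥ 1, 1 ≤ h n) (hd : ∀ n ≥ 1, 1 ≤ d n)
    (hc1 : c 1 = h 1)
    (hrec : ∀ n ≥ 2, c n = c (n - 1) + h n * (1 + ∑ k ∈ Finset.Icc 1 (n - 1), d k * c k)) :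
    (∀ n ≥ 3, ∃ α : ℝ, c n = (1 + α) * (h n * (d (n - 1) * c (n - 1))) ∧
        0 ≤ α ∧ α ≤ 1 / h n + 1 / h (n - 1)) ∧
      (Summable (fun n : ℕ => 1 / h (n + 1)) →
        ∃ β > 0, ∀ n ≥ 1, d n * c n ≤ β * ∏ k ∈ Finset.Icc 1 n, d k * h k) := by
  refine ⟨fun n hn => exists_eq_one_add_mul_of_rec hh hd hc1 hrec n (by omega), fun hsum => ?_⟩
  set ε : ℕ → ℝ := fun m => 1 / h (m + 2) + 1 / h (m + 1)
  have hε : ∀ m, 0 ≤ ε m := fun m => by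
    have := hh (m + 2) (by omega)
    have := hh (m + 1) (by omega)
    positivity
  have hεs : Summable ε := ((summable_nat_add_iff 1).mpr hsum).add hsum
  refine ⟨exp (∑' m, ε m), exp_pos _, fun n hn => ?_⟩
  obtain ⟨m, rfl⟩ : ∃ m, n = m + 1 := ⟨n - 1, by omega⟩
  set u : ℕ → ℝ := fun m => d (m + 1) * c (m + 1) / ∏ k ∈ Icc 1 (m + 1), d k * h k with hu
  have hu0 : u 0 = 1 := by
    simp only [hu, zero_add]
    rw [Icc_self, prod_singleton, hc1]
    exact div_self (by nlinarith [hh 1 le_rfl, hd 1 le_rfl])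
  have hbound : u m ≤ u 0 * exp (∑' m, ε m) :=
    le_mul_exp_tsum_of_le_one_add_mul hε hεs (hu0 ▸ zero_le_one)
      (fun m => div_prod_succ_le_of_rec hh hd hc1 hrec (m + 1) (by omega)) m
  rw [hu0, one_mul] at hbound
  exact (div_le_iff₀ (prod_Icc_mul_pos hh hd _)).mp hbound
end

section
/- Let h_n be positive integers with h_n = 2 for n ∉ {n_k} and suppose along the subsequence, (log h_{n_k})/∏_{j=1}^{n_k−1} h_j ∈ [1/k, 2/k] and k·∏_{j=1}^{n_k−1} h_j ≤ c_{n_k−1} where c_n ≥ ∏_{j=1}^n h_j ≥ 2^n. Then ∑_{n=2}^∞ (log h_n)/c_{n-1} ≤ ∑_{n=1}^∞ (log 2)/2^{n-1} + ∑_{k=1}^∞ 2/k² < ∞, while ∑_{n=2}^∞ (log h_n)/∏_{j=1}^{n-1} h_j ≥ ∑_{k=1}^∞ 1/k = ∞. -/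
/-!
Every `h n` with `n ≥ 1` is at least `2` (off the subsequence by assumption, on it because `log (h (n k)) > 0`),
so `∏_{j ≤ n} h j ≥ 2 ^ n`. Off the subsequence the terms `log 2 / c (n-1)` are therefore dominated
by a geometric series, while at `n = n k` the hypotheses give `log (h n) / c (n-1) ≤ 2 / k ^ 2`.
For the second series the terms at `n = n k` are at least `1 / k`, so it dominates the harmonic
series. Both comparisons are made against `extend nk a 0`, the sequence carrying the
value `a k` at position `n k` and `0` elsewhere, which is summable exactly when `a` is.
-/

open Finset Function Real

lemma Nat.two_le_of_log_div_pos {m : ℕ} {x : ℝ} (h : 0 < Real.log m / x) : 2 ≤ m := by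
  by_contra! hm
  interval_cases m <;> simp at h

lemma two_pow_le_prod_Icc {h : ℕ → ℕ} {n : ℕ} (hh : ∀ j ∈ Icc 1 n, 2 ≤ h j) :
    (2 : ℝ) ^ n ≤ ∏ j ∈ Icc 1 n, (h j : ℝ) := by
  have := pow_card_le_prod (Icc 1 n) h 2 hh
  rw [Nat.card_Icc, add_tsub_cancel_right] at this
  exact_mod_cast this

lemma summable_extend_zero_comp_add_iff {e : ℕ → ℕ} (he : Injective e) (a : ℕ → ℝ) (d : ℕ) :
    Summable (fun n ↦ extend e a 0 (n + d)) ↔ Summable a :=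
  (summable_nat_add_iff d).trans (summable_extend_zero he)

section Subsequence

variable {nk h : ℕ → ℕ}

lemma two_le_of_eq_two_off_subseq (hh2 : ∀ n ≥ 1, (∀ k ≥ 1, n ≠ nk k) → h n = 2)
    (hlow : ∀ k : ℕ, 1 ≤ k → 1 / (k : ℝ) ≤
      log (h (nk k)) / ∏ j ∈ Icc 1 (nk k - 1), (h j : ℝ))
    {n : ℕ} (hn : 1 ≤ n) : 2 ≤ h n := by
  by_cases hoff : ∀ k ≥ 1, n ≠ nk k
  · exact (hh2 n hn hoff).ge
  · push Not at hoff
    obtain ⟨k, hk, rfl⟩ := hoff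
    exact Nat.two_le_of_log_div_pos ((one_div_pos.2 (by exact_mod_cast hk)).trans_le (hlow k hk))

lemma log_div_le_geometric_add_extend {c : ℕ → ℝ} (hmono : StrictMono nk)
    (hh2 : ∀ n ≥ 1, (∀ k ≥ 1, n ≠ nk k) → h n = 2)
    (hc : ∀ n ≥ 1, (∏ j ∈ Icc 1 n, (h j : ℝ)) ≤ c n)
    (hup : ∀ k : ℕ, 1 ≤ k → log (h (nk k)) / (∏ j ∈ Icc 1 (nk k - 1), (h j : ℝ)) ≤
      2 / (k : ℝ))
    (hck : ∀ k : ℕ, 1 ≤ k → (k : ℝ) * ∏ j ∈ Icc 1 (nk k - 1), (h j : ℝ) ≤ c (nk k - 1))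
    (hprod : ∀ n, (2 : ℝ) ^ n ≤ ∏ j ∈ Icc 1 n, (h j : ℝ)) (n : ℕ) :
    log (h (n + 2)) / c (n + 1) ≤
      log 2 / 2 / 2 ^ n + extend nk (fun k : ℕ ↦ 2 / (k : ℝ) ^ 2) 0 (n + 2) := by
  have hsq_nonneg : 0 ≤ fun k : ℕ ↦ 2 / (k : ℝ) ^ 2 := fun _ ↦ by positivity
  have hextend := extend_nonneg (f := nk) hsq_nonneg le_rfl (n + 2)
  by_cases hon : ∃ k ≥ 1, nk k = n + 2
  · obtain ⟨k, hk, hkn⟩ := hon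
    have hn : n + 1 = nk k - 1 := by omega
    rw [← hkn, hn, hmono.injective.extend_apply]
    set P := ∏ j ∈ Icc 1 (nk k - 1), (h j : ℝ)
    have hkpos : (0 : ℝ) < k := by exact_mod_cast hk
    have hkP : 0 < k * P := mul_pos hkpos ((pow_pos two_pos _).trans_le (hprod _))
    calc log (h (nk k)) / c (nk k - 1)
        ≤ log (h (nk k)) / (k * P) :=
          div_le_div_of_nonneg_left (log_natCast_nonneg _) hkP (hck k hk)
      _ = log (h (nk k)) / P / k := by rw [div_div, mul_comm]
      _ ≤ 2 / k / k := div_le_div_of_nonneg_right (hup k hk) hkpos.le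
      _ = 2 / (k : ℝ) ^ 2 := by rw [div_div, sq]
      _ ≤ _ := le_add_of_nonneg_left (by positivity)
  · push Not at hon
    rw [hh2 (n + 2) (by omega) fun k hk ↦ (hon k hk).symm]
    have h2c : (2 : ℝ) ^ (n + 1) ≤ c (n + 1) := (hprod _).trans (hc _ (by omega))
    calc log ((2 : ℕ) : ℝ) / c (n + 1)
        ≤ log 2 / 2 ^ (n + 1) := by
          push_cast
          exact div_le_div_of_nonneg_left (log_nonneg one_le_two) (by positivity) h2c
      _ = log 2 / 2 / 2 ^ n := by rw [pow_succ', div_div]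
      _ ≤ _ := le_add_of_nonneg_right hextend

lemma extend_le_log_div_prod (hmono : StrictMono nk)
    (hlow : ∀ k : ℕ, 1 ≤ k → 1 / (k : ℝ) ≤
      log (h (nk k)) / ∏ j ∈ Icc 1 (nk k - 1), (h j : ℝ)) (n : ℕ) :
    extend nk (fun k : ℕ ↦ 1 / (k : ℝ)) 0 (n + 2) ≤
      log (h (n + 2)) / ∏ j ∈ Icc 1 (n + 1), (h j : ℝ) := by
  have hnonneg : 0 ≤ log (h (n + 2)) / ∏ j ∈ Icc 1 (n + 1), (h j : ℝ) := by
    have := log_natCast_nonneg (h (n + 2))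
    positivity
  by_cases hon : n + 2 ∈ Set.range nk
  · obtain ⟨k, hkn⟩ := hon
    rw [← hkn] at hnonneg ⊢
    rw [hmono.injective.extend_apply]
    rcases Nat.eq_zero_or_pos k with rfl | hk
    · simpa using hnonneg
    · have hn : n + 1 = nk k - 1 := by omega
      rw [hn]
      exact hlow k hk
  · rwa [extend_apply' _ _ _ hon]

end Subsequence

theorem stmt_18_general (nk : ℕ → ℕ) (hmono : StrictMono nk)
    (h : ℕ → ℕ)
    (hh2 : ∀ n ≥ 1, (∀ k ≥ 1, n ≠ nk k) → h n = 2)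
    (c : ℕ → ℝ) (hc : ∀ n ≥ 1, (∏ j ∈ Finset.Icc 1 n, (h j : ℝ)) ≤ c n)
    (hlow : ∀ k : ℕ, 1 ≤ k → 1 / (k : ℝ) ≤
      Real.log (h (nk k)) / ∏ j ∈ Finset.Icc 1 (nk k - 1), (h j : ℝ))
    (hup : ∀ k : ℕ, 1 ≤ k → Real.log (h (nk k)) / (∏ j ∈ Finset.Icc 1 (nk k - 1), (h j : ℝ)) ≤
      2 / (k : ℝ))
    (hck : ∀ k : ℕ, 1 ≤ k → (k : ℝ) * ∏ j ∈ Finset.Icc 1 (nk k - 1), (h j : ℝ) ≤ c (nk k - 1)) :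
    Summable (fun n : ℕ => Real.log (h (n + 2)) / c (n + 1)) ∧
      ¬ Summable (fun n : ℕ => Real.log (h (n + 2)) / ∏ j ∈ Finset.Icc 1 (n + 1), (h j : ℝ)) := by
  have hprod (n : ℕ) : (2 : ℝ) ^ n ≤ ∏ j ∈ Icc 1 n, (h j : ℝ) :=
    two_pow_le_prod_Icc fun j hj ↦ two_le_of_eq_two_off_subseq hh2 hlow (mem_Icc.1 hj).1
  constructor
  · have hsq : Summable fun k : ℕ ↦ 2 / (k : ℝ) ^ 2 :=
      ((summable_one_div_nat_pow.2 one_lt_two).mul_left 2).congr fun _ ↦ mul_one_div _ _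
    refine Summable.of_nonneg_of_le (fun n ↦ ?_)
      (log_div_le_geometric_add_extend hmono hh2 hc hup hck hprod)
      ((summable_geometric_two' _).add
        ((summable_extend_zero_comp_add_iff hmono.injective _ 2).2 hsq))
    have := (pow_pos two_pos (n + 1)).trans_le ((hprod _).trans (hc _ (by omega)))
    have := log_natCast_nonneg (h (n + 2))
    positivity
  · intro hsum
    have hinv_nonneg : 0 ≤ fun k : ℕ ↦ 1 / (k : ℝ) := fun _ ↦ by positivity
    exact not_summable_one_div_natCast ((summable_extend_zero_comp_add_iff hmono.injective _ 2).1
      (hsum.of_nonneg_of_le (fun _ ↦ extend_nonneg hinv_nonneg le_rfl _)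
        (extend_le_log_div_prod hmono hlow)))

/-- With `h n = 2` off a strictly increasing subsequence `(n k)`, along which
`1/k ≤ log (h (n k)) / ∏_{j<n k} h j ≤ 2/k` and
`c (n k - 1) ≥ k * ∏_{j<n k} h j`, where `c n ≥ ∏_{j=1}^n h j`, the series
`∑_{n≥2} log (h n) / c (n-1)` converges while
`∑_{n≥2} log (h n) / ∏_{j=1}^{n-1} h j` diverges. -/
theorem stmt_18 (nk : ℕ → ℕ) (hmono : StrictMono nk) (hnk1 : ∀ k ≥ 1, 1 ≤ nk k)
    (h : ℕ → ℕ) (hh : ∀ n ≥ 1, 1 ≤ h n)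
    (hh2 : ∀ n ≥ 1, (∀ k ≥ 1, n ≠ nk k) → h n = 2)
    (c : ℕ → ℝ) (hc : ∀ n ≥ 1, (∏ j ∈ Finset.Icc 1 n, (h j : ℝ)) ≤ c n)
    (hcpos : ∀ n ≥ 1, 0 < c n)
    (hlow : ∀ k : ℕ, 1 ≤ k → 1 / (k : ℝ) ≤
      Real.log (h (nk k)) / ∏ j ∈ Finset.Icc 1 (nk k - 1), (h j : ℝ))
    (hup : ∀ k : ℕ, 1 ≤ k → Real.log (h (nk k)) / (∏ j ∈ Finset.Icc 1 (nk k - 1), (h j : ℝ)) ≤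
      2 / (k : ℝ))
    (hck : ∀ k : ℕ, 1 ≤ k → (k : ℝ) * ∏ j ∈ Finset.Icc 1 (nk k - 1), (h j : ℝ) ≤ c (nk k - 1)) :
    Summable (fun n : ℕ => Real.log (h (n + 2)) / c (n + 1)) ∧
      ¬ Summable (fun n : ℕ => Real.log (h (n + 2)) / ∏ j ∈ Finset.Icc 1 (n + 1), (h j : ℝ)) :=
  stmt_18_general nk hmono h hh2 c hc hlow hup hck
end
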